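/- Let 1 ≤ i ≤ n and let m_i ∈ S_i = K[x_i,…,x_n] be a monomial of degree d_i. Then, as K-vector spaces, S_i = ⊕_{j=1}^{d_i} u_{ij} K[Z_{ij}] ⊕ m_i S_i, an internal direct sum of K-subspaces of S, where m_i S_i = {m_i f : f ∈ S_i}. -/

import Mathlib

open MvPolynomial

noncomputable section

variable (K : Type*) [Field K]

/-- The set of monomials (with coefficient 1) whose variables lie in `Z`. -/
def monomialsIn {σ : Type*} (Z : Set σ) : Set (MvPolynomial σ K) :=
  {p | ∃ a : σ →₀ ℕ, ↑a.support ⊆ Z ∧ p = monomial a 1}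

/-- `u K[Z]` : the `K`-linear span of the polynomials `u * v`, `v` a monomial in `Z`. -/
def stanleySpace {σ : Type*} (u : MvPolynomial σ K) (Z : Set σ) :
    Submodule K (MvPolynomial σ K) :=
  Submodule.span K ((u * ·) '' monomialsIn K Z)


/-- The variables (with multiplicity, in increasing order) of the monomial with exponent
vector `a`; its `j`-th entry (0-indexed) is the variable `v(w_{j+1})` of the paper. -/
def varList {n : ℕ} (a : Fin n →₀ ℕ) : List (Fin n) :=
  (Finsupp.toMultiset a).sort (· ≤ ·)

/-- `u_{j+1}` : the product of the first `j` variables (with multiplicity, in increasing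
order) of the monomial with exponent vector `a`; `u_1 = 1`. -/
def uPoly (K : Type*) [Field K] {n : ℕ} (a : Fin n →₀ ℕ) (j : ℕ) : MvPolynomial (Fin n) K :=
  (((varList a).take j).map X).prod

/-- `Z_{i,j+1} = {x_i,…,x_n} \ {x_{v(w_{i,j+1})}}` (0-indexed in `i` and `j`),
for the monomial `m_i` with exponent vector `a`. -/
def Zij {n : ℕ} (i : ℕ) (a : Fin n →₀ ℕ) (j : Fin (varList a).length) : Set (Fin n) :=
  {k : Fin n | i ≤ (k : ℕ)} \ {(varList a).get j}

/-!
Every summand is spanned by monomials, and spans of disjoint sets of monomials are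
independent, so it suffices to sort the exponent vectors `b` of `S_i`. Writing
`m = x_{v_1} ⋯ x_{v_d}` with `v_1 ≤ ⋯ ≤ v_d` and `u_j = x_{v_1} ⋯ x_{v_{j-1}}`, either
`m ∣ x^b`, or there is a unique `j` with `u_j ∣ x^b` and `u_{j+1} ∤ x^b`; the monomials of
the second kind are exactly those of `u_j K[Z_j]`, because `u_j ∣ x^b` and `u_{j+1} ∤ x^b`
say that `x^b / u_j` does not involve `x_{v_j}`.
-/

open Function

theorem Nat.exists_lt_and_not_succ {P : ℕ → Prop} {N : ℕ} (h0 : P 0) (hN : ¬ P N) :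
    ∃ j < N, P j ∧ ¬ P (j + 1) := by
  induction N with
  | zero => exact absurd h0 hN
  | succ N ih =>
    by_cases hPN : P N
    · exact ⟨N, N.lt_succ_self, hPN, hN⟩
    · obtain ⟨j, hj, hPj⟩ := ih hPN
      exact ⟨j, hj.trans N.lt_succ_self, hPj⟩

theorem Finsupp.add_single_one_le_iff {σ : Type*} {b c : σ →₀ ℕ} (h : c ≤ b) (x : σ) :
    c + Finsupp.single x 1 ≤ b ↔ c x < b x := by
  rw [← le_tsub_iff_left h, Finsupp.single_le_iff, Finsupp.tsub_apply]
  omega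

theorem Finsupp.image_add_setOf_support_subset_diff {σ : Type*} {Z : Set σ} {c : σ →₀ ℕ}
    (hc : ↑c.support ⊆ Z) (Y : Set σ) :
    (c + ·) '' {e : σ →₀ ℕ | ↑e.support ⊆ Z \ Y} =
      {b | ↑b.support ⊆ Z ∧ c ≤ b ∧ ∀ y ∈ Y, b y = c y} := by
  classical
  ext b
  constructor
  · rintro ⟨e, he, rfl⟩
    refine ⟨?_, le_self_add, fun y hy => ?_⟩
    · refine (Finset.coe_subset.mpr Finsupp.support_add).trans ?_
      rw [Finset.coe_union]
      exact Set.union_subset hc (he.trans Set.sdiff_subset)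
    · have : e y = 0 := Finsupp.notMem_support_iff.mp fun hye => (he hye).2 hy
      simp [this]
  · rintro ⟨hb, hcb, hY⟩
    refine ⟨b - c, fun x hx => ⟨hb (Finsupp.support_tsub hx), fun hxY => ?_⟩,
      add_tsub_cancel_of_le hcb⟩
    simp [Finsupp.mem_support_iff, hY x hxY] at hx

section ExponentClasses

variable {σ : Type*} [DecidableEq σ]

-- For `l = varList a` this is the exponent vector of `u_{j+1}`.
def prefixExponent (l : List σ) (j : ℕ) : σ →₀ ℕ :=
  Multiset.toFinsupp (l.take j)

theorem prefixExponent_zero (l : List σ) : prefixExponent l 0 = 0 := by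
  simp [prefixExponent]

theorem prefixExponent_succ {l : List σ} {j : ℕ} (hj : j < l.length) :
    prefixExponent l (j + 1) = prefixExponent l j + Finsupp.single l[j] 1 := by
  rw [prefixExponent, List.take_add_one, List.getElem?_eq_getElem hj, ← Multiset.coe_add,
    Multiset.toFinsupp_add]
  simp [prefixExponent]

theorem prefixExponent_mono (l : List σ) : Monotone (prefixExponent l) := fun _ _ h =>
  Multiset.toFinsupp_strictMono.monotone <|
    Multiset.coe_le.mpr (List.take_sublist_take_left h).subperm

theorem support_prefixExponent_subset {l : List σ} {Z : Set σ} (hl : ∀ x ∈ l, x ∈ Z) (j : ℕ) :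
    ↑(prefixExponent l j).support ⊆ Z := fun x hx => by
  simp only [prefixExponent, Multiset.toFinsupp_support, Finset.mem_coe, Multiset.mem_toFinset,
    Multiset.mem_coe] at hx
  exact hl x (List.mem_of_mem_take hx)

theorem list_prod_map_X (K : Type*) [CommSemiring K] (l : List σ) :
    (l.map X).prod = (monomial (Multiset.toFinsupp l) 1 : MvPolynomial σ K) := by
  induction l with
  | nil => simp
  | cons x l ih =>
    rw [List.map_cons, List.prod_cons, ih, X, monomial_mul, one_mul, ← Multiset.cons_coe,
      ← Multiset.singleton_add, Multiset.toFinsupp_add, Multiset.toFinsupp_singleton]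

def exponentClass (Z : Set σ) (l : List σ) : Option (Fin l.length) → Set (σ →₀ ℕ)
  | none => {b | ↑b.support ⊆ Z ∧ prefixExponent l l.length ≤ b}
  | some j => {b | ↑b.support ⊆ Z ∧ prefixExponent l j ≤ b ∧ ¬ prefixExponent l (j + 1) ≤ b}

variable {Z : Set σ} {l : List σ}

theorem prefixExponent_le_iff_of_mem_exponentClass {j : Fin l.length} {b : σ →₀ ℕ}
    (hb : b ∈ exponentClass Z l (some j)) (k : ℕ) :
    prefixExponent l k ≤ b ↔ k ≤ j := by
  refine ⟨fun hk => ?_, fun hk => (prefixExponent_mono l hk).trans hb.2.1⟩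
  by_contra! hjk
  exact hb.2.2 ((prefixExponent_mono l hjk).trans hk)

theorem pairwise_disjoint_exponentClass : Pairwise (Disjoint on exponentClass Z l) := by
  have key : ∀ (j : Fin l.length) (o : Option (Fin l.length)) (b : σ →₀ ℕ),
      b ∈ exponentClass Z l (some j) → b ∈ exponentClass Z l o → some j = o := by
    rintro j (_ | j') b hb hb'
    · have := (prefixExponent_le_iff_of_mem_exponentClass hb _).mp hb'.2
      exact absurd j.isLt (not_lt.mpr this)
    · have h₁ := (prefixExponent_le_iff_of_mem_exponentClass hb j').mp hb'.2.1
      have h₂ := (prefixExponent_le_iff_of_mem_exponentClass hb' j).mp hb.2.1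
      exact congrArg some (Fin.ext (le_antisymm h₂ h₁))
  rintro (_ | j) o hne
  · rcases o with _ | j'
    · exact absurd rfl hne
    · exact Set.disjoint_right.mpr fun b hb hb' => hne (key j' none b hb hb').symm
  · exact Set.disjoint_left.mpr fun b hb hb' => hne (key j o b hb hb')

theorem iUnion_exponentClass : ⋃ o, exponentClass Z l o = {b | ↑b.support ⊆ Z} := by
  refine Set.Subset.antisymm (Set.iUnion_subset fun o b hb => ?_) fun b hb => ?_
  · rcases o with _ | j
    exacts [hb.1, hb.1]
  by_cases hall : prefixExponent l l.length ≤ b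
  · exact Set.mem_iUnion.mpr ⟨none, hb, hall⟩
  obtain ⟨j, hj, hle, hnle⟩ := Nat.exists_lt_and_not_succ
    (P := fun k => prefixExponent l k ≤ b) (by simp [prefixExponent_zero]) hall
  exact Set.mem_iUnion.mpr ⟨some ⟨j, hj⟩, hb, hle, hnle⟩

end ExponentClasses

section Submodules

variable {σ : Type*} {K}

theorem iSup_restrictSupport {ι : Type*} (T : ι → Set (σ →₀ ℕ)) :
    ⨆ o, restrictSupport K (T o) = restrictSupport K (⋃ o, T o) := by
  simp only [restrictSupport, AddMonoidAlgebra.supported_eq_map, ← Submodule.map_iSup,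
    Finsupp.supported_iUnion]

theorem iSupIndep_restrictSupport {ι : Type*} {T : ι → Set (σ →₀ ℕ)}
    (hT : Pairwise (Disjoint on T)) : iSupIndep fun o => restrictSupport K (T o) := by
  intro o
  have hle : ⨆ (o' : ι) (_ : o' ≠ o), restrictSupport K (T o') ≤
      restrictSupport K (⋃ (o' : ι) (_ : o' ≠ o), T o') :=
    iSup₂_le fun o' ho' => restrictSupport_mono (R := K)
      (Set.subset_iUnion₂ (s := fun o' (_ : o' ≠ o) => T o') o' ho')
  refine Disjoint.mono_right hle ?_
  simp only [restrictSupport, AddMonoidAlgebra.supported_eq_map]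
  refine Submodule.disjoint_map (LinearEquiv.injective _)
    (Finsupp.disjoint_supported_supported ?_)
  simpa only [Set.disjoint_iUnion_right] using fun o' ho' => hT ho'.symm

theorem span_monomialsIn (Z : Set σ) :
    Submodule.span K (monomialsIn K Z) = restrictSupport K {b | ↑b.support ⊆ Z} := by
  rw [restrictSupport_eq_span]
  congr 1
  ext p
  exact ⟨fun ⟨b, hb, hp⟩ => ⟨b, hb, hp.symm⟩, fun ⟨b, hb, hp⟩ => ⟨b, hb, hp.symm⟩⟩

theorem map_mulLeft_span_monomialsIn (u : MvPolynomial σ K) (Z : Set σ) :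
    (Submodule.span K (monomialsIn K Z)).map (LinearMap.mulLeft K u) = stanleySpace K u Z :=
  Submodule.map_span _ _

theorem stanleySpace_monomial (c : σ →₀ ℕ) (Z : Set σ) :
    stanleySpace K (monomial c 1) Z =
      restrictSupport K ((c + ·) '' {e : σ →₀ ℕ | ↑e.support ⊆ Z}) := by
  rw [← map_mulLeft_span_monomialsIn, span_monomialsIn, restrictSupport_eq_span,
    restrictSupport_eq_span, Submodule.map_span, ← Set.image_comp, ← Set.image_comp]
  congr 1
  exact Set.image_congr fun e _ => by simp [monomial_mul]

end Submodules

section StanleyDecomposition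

variable {σ : Type*} [DecidableEq σ] {K} {Z : Set σ} {l : List σ}

theorem stanleySpace_prefixExponent_length (hl : ∀ x ∈ l, x ∈ Z) :
    stanleySpace K (monomial (prefixExponent l l.length) 1) Z =
      restrictSupport K (exponentClass Z l none) := by
  have h :=
    Finsupp.image_add_setOf_support_subset_diff (support_prefixExponent_subset hl l.length) ∅
  simp only [Set.sdiff_empty, Set.mem_empty_iff_false, false_imp_iff, implies_true,
    and_true] at h
  rw [stanleySpace_monomial, h]
  rfl

theorem stanleySpace_prefixExponent (hl : ∀ x ∈ l, x ∈ Z) (j : Fin l.length) :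
    stanleySpace K (monomial (prefixExponent l j) 1) (Z \ {l.get j}) =
      restrictSupport K (exponentClass Z l (some j)) := by
  rw [stanleySpace_monomial, Finsupp.image_add_setOf_support_subset_diff
    (support_prefixExponent_subset hl j)]
  congr 1
  ext b
  simp only [Set.mem_ofPred_eq, Set.mem_singleton_iff, forall_eq, exponentClass,
    prefixExponent_succ j.isLt, List.get_eq_getElem]
  refine and_congr_right fun _ => and_congr_right fun hle => ?_
  rw [Finsupp.add_single_one_le_iff hle, not_lt]
  exact ⟨fun h => h.le, fun h => le_antisymm h (hle _)⟩

end StanleyDecomposition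

theorem monomial_prefixExponent_varList {n : ℕ} (a : Fin n →₀ ℕ) (j : ℕ) :
    (monomial (prefixExponent (varList a) j) 1 : MvPolynomial (Fin n) K) = uPoly K a j := by
  rw [uPoly, list_prod_map_X, prefixExponent]

theorem prefixExponent_varList_length {n : ℕ} (a : Fin n →₀ ℕ) :
    prefixExponent (varList a) (varList a).length = a := by
  rw [prefixExponent, List.take_length, varList, Multiset.sort_eq, Finsupp.toMultiset_toFinsupp]

theorem mem_support_of_mem_varList {n : ℕ} {a : Fin n →₀ ℕ} {x : Fin n} (hx : x ∈ varList a) :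
    x ∈ a.support := by
  rwa [varList, Multiset.mem_sort, Finsupp.mem_toMultiset] at hx

theorem polynomial_subring_decomposition_general
    {K : Type*} [Field K] {n i : ℕ}
    (a : Fin n →₀ ℕ) (ha : ↑a.support ⊆ {k : Fin n | i ≤ (k : ℕ)}) :
    -- `S_i = K[x_i,…,x_n]` as a `K`-subspace of `S` :
    let Si : Submodule K (MvPolynomial (Fin n) K) :=
      Submodule.span K (monomialsIn K {k : Fin n | i ≤ (k : ℕ)})
    -- the summands : `m S_i` and the spaces `u_{ij} K[Z_{ij}]`, `1 ≤ j ≤ d_i` :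
    let F : Option (Fin (varList a).length) → Submodule K (MvPolynomial (Fin n) K) := fun o =>
      Option.elim o (Submodule.map (LinearMap.mulLeft K (monomial a (1 : K))) Si)
        fun j => stanleySpace K (uPoly K a j) (Zij i a j)
    iSupIndep F ∧ iSup F = Si := by
  intro Si F
  have hl : ∀ x ∈ varList a, x ∈ {k : Fin n | i ≤ (k : ℕ)} := fun x hx =>
    ha (mem_support_of_mem_varList hx)
  have hF : F = fun o =>
      restrictSupport K (exponentClass {k : Fin n | i ≤ (k : ℕ)} (varList a) o) := by
    funext o
    rcases o with _ | j
    · rw [← stanleySpace_prefixExponent_length hl, prefixExponent_varList_length]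
      exact map_mulLeft_span_monomialsIn _ _
    · rw [← stanleySpace_prefixExponent hl, monomial_prefixExponent_varList]
      rfl
  rw [hF, iSup_restrictSupport, iUnion_exponentClass]
  exact ⟨iSupIndep_restrictSupport pairwise_disjoint_exponentClass,
    (span_monomialsIn _).symm⟩

/-- For a monomial `m = monomial a 1 ∈ S_i = K[x_i,…,x_n]` (`0`-indexed:
`i < n`, variables `x_i,…,x_{n-1}`) of degree `d = (varList a).length`, one has, as
internal direct sum of `K`-subspaces of `S`:
`S_i = ⊕_{j=1}^{d} u_{ij} K[Z_{ij}] ⊕ m S_i`, where `m S_i = {m f : f ∈ S_i}`. -/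
theorem polynomial_subring_decomposition
    {K : Type*} [Field K] {n i : ℕ} (hi : i < n)
    (a : Fin n →₀ ℕ) (ha : ↑a.support ⊆ {k : Fin n | i ≤ (k : ℕ)}) :
    -- `S_i = K[x_i,…,x_n]` as a `K`-subspace of `S` :
    let Si : Submodule K (MvPolynomial (Fin n) K) :=
      Submodule.span K (monomialsIn K {k : Fin n | i ≤ (k : ℕ)})
    -- the summands : `m S_i` and the spaces `u_{ij} K[Z_{ij}]`, `1 ≤ j ≤ d_i` :
    let F : Option (Fin (varList a).length) → Submodule K (MvPolynomial (Fin n) K) := fun o =>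
      Option.elim o (Submodule.map (LinearMap.mulLeft K (monomial a (1 : K))) Si)
        fun j => stanleySpace K (uPoly K a j) (Zij i a j)
    iSupIndep F ∧ iSup F = Si :=
  polynomial_subring_decomposition_general a ha
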